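/- Let J be closed and φ, η ∈ J*. If φ meshes with η, then the complex conjugate of χ^η(x_φ) equals q^{corank(η) − rank(M_φ^η)} · θ(b_0 · b_φ^η) · Π_{(i,j) ∈ supp(φ) ∩ supp(η)} θ(φ_{ij} η_{ij}), where b_0 ∈ 𝔽_q^J is any solution of M_φ^η b_0 = −a_φ^η; if φ does not mesh with η, then χ^η(x_φ) = 0. -/

import Mathlib

open Matrix BigOperators

namespace SCT

/-- Pairs of indices. -/
abbrev Pr (n : ℕ) := Fin n × Fin n

/-- A closed subset `J ⊆ {(i,j) : i < j}`:  `(i,j) ∈ J` and `(j,k) ∈ J` imply `(i,k) ∈ J`. -/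
def Closed {n : ℕ} (J : Finset (Pr n)) : Prop :=
  (∀ p ∈ J, p.1 < p.2) ∧
  ∀ i j k : Fin n, (i, j) ∈ J → (j, k) ∈ J → (i, k) ∈ J

variable {F : Type*} [Field F] [Fintype F] [DecidableEq F] {n : ℕ}

/-- `X_φ = Σ_{(i,j) ∈ J} φ_{ij} X_{ij}`. -/
def Xmat (J : Finset (Pr n)) (φ : Pr n → F) : Matrix (Fin n) (Fin n) F :=
  Matrix.of fun i j => if (i, j) ∈ J then φ (i, j) else 0

/-- `x_φ = 1 + X_φ`. -/
def xmat (J : Finset (Pr n)) (φ : Pr n → F) : Matrix (Fin n) (Fin n) F :=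
  1 + Xmat J φ

/-- `x_{ij}(t) = 1 + t X_{ij}`. -/
def xelt (i j : Fin n) (t : F) : Matrix (Fin n) (Fin n) F :=
  1 + Matrix.single i j t

/-- The pattern group `U_J`, as a set of matrices: ones on the diagonal, entries off the
diagonal vanish outside `J`. -/
def UJ (J : Finset (Pr n)) : Set (Matrix (Fin n) (Fin n) F) :=
  {M | (∀ i, M i i = 1) ∧ ∀ i j : Fin n, i ≠ j → (i, j) ∉ J → M i j = 0}

/-- `𝔫_J`: matrices supported on `J`. -/
def nJset (J : Finset (Pr n)) : Set (Matrix (Fin n) (Fin n) F) :=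
  {M | ∀ i j : Fin n, (i, j) ∉ J → M i j = 0}

/-- The functional `λ_η` evaluated at a matrix of `𝔫_J`. -/
def lam (J : Finset (Pr n)) (η : Pr n → F) (X : Matrix (Fin n) (Fin n) F) : F :=
  ∑ p ∈ J, η p * X p.1 p.2

/-- A functional with coefficients indexed by `J` evaluated at a matrix. -/
def lamSub (J : Finset (Pr n)) (η : {p // p ∈ J} → F) (X : Matrix (Fin n) (Fin n) F) : F :=
  ∑ p ∈ J.attach, η p * X p.1.1 p.1.2

/-- The two-sided orbit `O_φ = U_J X_φ U_J ⊆ 𝔫_J`. -/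
def biOrbit (J : Finset (Pr n)) (φ : Pr n → F) : Set (Matrix (Fin n) (Fin n) F) :=
  {Y | ∃ u v : Matrix (Fin n) (Fin n) F, u ∈ UJ J ∧ v ∈ UJ J ∧ Y = u * Xmat J φ * v}

/-- `(M_φ^R)_{(i,l),(j,k)} = φ_{ij}` if `k = l` and `(i,j,l) ∈ 𝒫`, else `0`. -/
def MphiR (J : Finset (Pr n)) (φ : Pr n → F) : Matrix {p // p ∈ J} {p // p ∈ J} F :=
  Matrix.of fun p q =>
    if q.1.2 = p.1.2 ∧ (p.1.1, q.1.1) ∈ J ∧ (q.1.1, p.1.2) ∈ J then φ (p.1.1, q.1.1) else 0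

/-- `(M_φ^L)_{(i,l),(j,k)} = φ_{kl}` if `i = j` and `(i,k,l) ∈ 𝒫`, else `0`. -/
def MphiL (J : Finset (Pr n)) (φ : Pr n → F) : Matrix {p // p ∈ J} {p // p ∈ J} F :=
  Matrix.of fun p q =>
    if q.1.1 = p.1.1 ∧ (p.1.1, q.1.2) ∈ J ∧ (q.1.2, p.1.2) ∈ J then φ (q.1.2, p.1.2) else 0

/-- `(M_L^η)_{(j,k),(i,l)} = η_{ik}` if `l = j` and `(i,j,k) ∈ 𝒫`, else `0`. -/
def MetaL (J : Finset (Pr n)) (η : Pr n → F) : Matrix {p // p ∈ J} {p // p ∈ J} F :=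
  Matrix.of fun p q =>
    if q.1.2 = p.1.1 ∧ (q.1.1, p.1.1) ∈ J ∧ (p.1.1, p.1.2) ∈ J then η (q.1.1, p.1.2) else 0

/-- `(M_R^η)_{(j,k),(i,l)} = η_{jl}` if `k = i` and `(j,k,l) ∈ 𝒫`, else `0`. -/
def MetaR (J : Finset (Pr n)) (η : Pr n → F) : Matrix {p // p ∈ J} {p // p ∈ J} F :=
  Matrix.of fun p q =>
    if q.1.1 = p.1.2 ∧ (p.1.1, p.1.2) ∈ J ∧ (p.1.2, q.1.2) ∈ J then η (p.1.1, q.1.2) else 0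

/-- `corank(η) = rank(M_L^η)`. -/
noncomputable def corank (J : Finset (Pr n)) (η : Pr n → F) : ℕ := (MetaL J η).rank

/-- `(M_φ^η)_{(i,j),(k,l)} = φ_{jk} η_{il}` if `(i,j,k,l) ∈ 𝒫`, else `0`. -/
def Mmesh (J : Finset (Pr n)) (φ η : Pr n → F) : Matrix {p // p ∈ J} {p // p ∈ J} F :=
  Matrix.of fun p q =>
    if (p.1.2, q.1.1) ∈ J then φ (p.1.2, q.1.1) * η (p.1.1, q.1.2) else 0

/-- `(a_φ^η)_{(i,j)} = Σ_{(i,j,k) ∈ 𝒫} φ_{jk} η_{ik}`. -/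
def aVec (J : Finset (Pr n)) (φ η : Pr n → F) : {p // p ∈ J} → F :=
  fun p => ∑ k : Fin n, if (p.1.2, k) ∈ J then φ (p.1.2, k) * η (p.1.1, k) else 0

/-- `(b_φ^η)_{(j,k)} = Σ_{(i,j,k) ∈ 𝒫} φ_{ij} η_{ik}`. -/
def bVec (J : Finset (Pr n)) (φ η : Pr n → F) : {p // p ∈ J} → F :=
  fun p => ∑ i : Fin n, if (i, p.1.1) ∈ J then φ (i, p.1.1) * η (i, p.1.2) else 0

/-- `φ` meshes with `η`. -/
def Meshes (J : Finset (Pr n)) (φ η : Pr n → F) : Prop :=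
  (∃ b : {p // p ∈ J} → F, (Mmesh J φ η).mulVec b = -aVec J φ η) ∧
  ∀ v : {p // p ∈ J} → F, (Mmesh J φ η).mulVec v = 0 → bVec J φ η ⬝ᵥ v = 0

/-- The supercharacter `χ^η` evaluated at `x_φ`. -/
noncomputable def superchar (J : Finset (Pr n)) (θ : AddChar F ℂ) (η φ : Pr n → F) : ℂ :=
  ((Fintype.card F : ℂ) ^ corank J η / (Nat.card (biOrbit J φ) : ℂ)) *
    ∑ᶠ Y ∈ biOrbit J φ, (starRingEnd ℂ) (θ (lam J η Y))

/-- `χ` restricted to `U` is the character of an irreducible complex representation of `U`. -/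
def IsIrredCharOn (U : Set (Matrix (Fin n) (Fin n) F))
    (χ : Matrix (Fin n) (Fin n) F → ℂ) : Prop :=
  ∃ d : ℕ, 0 < d ∧ ∃ ρ : Matrix (Fin n) (Fin n) F → Matrix (Fin d) (Fin d) ℂ,
    ρ 1 = 1 ∧
    (∀ A ∈ U, ∀ B ∈ U, ρ (A * B) = ρ A * ρ B) ∧
    (∀ W : Submodule ℂ (Fin d → ℂ), (∀ A ∈ U, ∀ w ∈ W, (ρ A).mulVec w ∈ W) → W = ⊥ ∨ W = ⊤) ∧
    ∀ A ∈ U, (ρ A).trace = χ A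

/-- The full set of positive roots. -/
def Jfull (n : ℕ) : Finset (Pr n) := Finset.univ.filter fun p : Pr n => p.1 < p.2

/-!  The total order and partial sum on positive roots. -/

/-- `α < β` in the total order: `(r,s) < (i,j)` iff `r > i`, or `r = i` and `s > j`. -/
def rlt {n : ℕ} (a b : Pr n) : Prop := b.1 < a.1 ∨ (a.1 = b.1 ∧ b.2 < a.2)

/-- `α + β` is defined in `R⁺`. -/
def rdef {n : ℕ} (a b : Pr n) : Prop := a.2 = b.1 ∨ b.2 = a.1

/-- The sum `α + β` (when defined). -/
def rsum {n : ℕ} (a b : Pr n) : Pr n := if a.2 = b.1 then (a.1, b.2) else (b.1, a.2)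

/-! Algebra groups. -/

/-- The algebra group `H = 1 + 𝔫`. -/
def algH (nn : Submodule F (Matrix (Fin n) (Fin n) F)) : Set (Matrix (Fin n) (Fin n) F) :=
  {M | ∃ X ∈ nn, M = 1 + X}

/-- The two sided orbit `H X H ⊆ 𝔫` of `X`. -/
def algBiOrbit (nn : Submodule F (Matrix (Fin n) (Fin n) F))
    (X : Matrix (Fin n) (Fin n) F) : Set nn :=
  {Y | ∃ u ∈ algH nn, ∃ v ∈ algH nn, (Y : Matrix (Fin n) (Fin n) F) = u * X * v}

/-- The right orbit `{λ · u : u ∈ H} ⊆ 𝔫*` of a functional `λ`, described via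
`λ' = λ · u⁻¹ ↔ (∀ Y, λ' Y = λ (Y u))`. -/
def algRightOrbit (nn : Submodule F (Matrix (Fin n) (Fin n) F))
    (l : Module.Dual F nn) : Set (Module.Dual F nn) :=
  {l' | ∃ u ∈ algH nn, ∀ (Y : nn) (h : (Y : Matrix (Fin n) (Fin n) F) * u ∈ nn),
      l' Y = l ⟨(Y : Matrix (Fin n) (Fin n) F) * u, h⟩}

/-- The supercharacter `χ^λ` of an algebra group, evaluated at `1 + X`. -/
noncomputable def algSuperchar (nn : Submodule F (Matrix (Fin n) (Fin n) F))
    (θ : AddChar F ℂ) (l : Module.Dual F nn) (X : Matrix (Fin n) (Fin n) F) : ℂ :=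
  ((Nat.card (algRightOrbit nn l) : ℂ) / (Nat.card (algBiOrbit nn X) : ℂ)) *
    ∑ᶠ Y ∈ algBiOrbit nn X, (starRingEnd ℂ) (θ (l Y))

/-! Algebra groups with a fixed basis `X_1, …, X_d` of `𝔫`. -/

/-- `X_ρ = Σ_i ρ_i X_i`. -/
def bigX {d : ℕ} (Xb : Fin d → Matrix (Fin n) (Fin n) F) (ρ : Fin d → F) :
    Matrix (Fin n) (Fin n) F :=
  ∑ i : Fin d, ρ i • Xb i

/-- The two-sided orbit of `X_φ`, in coordinates. -/
def algCoeffBiOrbit {d : ℕ} (Xb : Fin d → Matrix (Fin n) (Fin n) F) (φ : Fin d → F) :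
    Set (Fin d → F) :=
  {ρ | ∃ ζ₁ ζ₂ : Fin d → F,
      (1 + bigX Xb ζ₁) * bigX Xb φ * (1 + bigX Xb ζ₂) = bigX Xb ρ}

/-- The right orbit of `λ_η`, in coordinates (`λ_η(X_ν) = η ⬝ᵥ ν`). -/
def algCoeffRightOrbit {d : ℕ} (Xb : Fin d → Matrix (Fin n) (Fin n) F) (η : Fin d → F) :
    Set (Fin d → F) :=
  {η' | ∃ ζ : Fin d → F, ∀ ρ ν : Fin d → F,
      bigX Xb ρ * (1 + bigX Xb ζ) = bigX Xb ν → η' ⬝ᵥ ρ = η ⬝ᵥ ν}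

/-- The supercharacter `χ^η` of an algebra group with fixed basis, evaluated at `x_φ`. -/
noncomputable def algCoeffSuperchar {d : ℕ} (Xb : Fin d → Matrix (Fin n) (Fin n) F)
    (θ : AddChar F ℂ) (η φ : Fin d → F) : ℂ :=
  ((Nat.card (algCoeffRightOrbit Xb η) : ℂ) / (Nat.card (algCoeffBiOrbit Xb φ) : ℂ)) *
    ∑ᶠ ρ ∈ algCoeffBiOrbit Xb φ, (starRingEnd ℂ) (θ (η ⬝ᵥ ρ))

/-- `(C_i)_{jk} = c_{ij}^k`. -/
def Cleft {d : ℕ} (c : Fin d → Fin d → Fin d → F) (i : Fin d) : Matrix (Fin d) (Fin d) F :=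
  Matrix.of fun j k => c i j k

/-- `(C^j)_{ik} = c_{ij}^k`. -/
def Cright {d : ℕ} (c : Fin d → Fin d → Fin d → F) (j : Fin d) : Matrix (Fin d) (Fin d) F :=
  Matrix.of fun i k => c i j k

/-- `(M_φ^η)_{ij} = φ C_i C^j η`. -/
def algMmesh {d : ℕ} (c : Fin d → Fin d → Fin d → F) (φ η : Fin d → F) :
    Matrix (Fin d) (Fin d) F :=
  Matrix.of fun i j => φ ⬝ᵥ (Cleft c i * Cright c j).mulVec η

/-- `(a_φ^η)_i = φ C_i η`. -/
def algAVec {d : ℕ} (c : Fin d → Fin d → Fin d → F) (φ η : Fin d → F) : Fin d → F :=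
  fun i => φ ⬝ᵥ (Cleft c i).mulVec η

/-- `(b_φ^η)_j = φ C^j η`. -/
def algBVec {d : ℕ} (c : Fin d → Fin d → Fin d → F) (φ η : Fin d → F) : Fin d → F :=
  fun j => φ ⬝ᵥ (Cright c j).mulVec η

/-- `φ` meshes with `η` (algebra-group version). -/
def algMeshes {d : ℕ} (c : Fin d → Fin d → Fin d → F) (φ η : Fin d → F) : Prop :=
  (∃ b : Fin d → F, (algMmesh c φ η).mulVec b = -algAVec c φ η) ∧
  ∀ v : Fin d → F, (algMmesh c φ η).mulVec v = 0 → algBVec c φ η ⬝ᵥ v = 0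


end SCT

/-!
Parametrize `U_J × U_J` by `(σ, τ) ∈ 𝔽_q^J × 𝔽_q^J` via `(1 + X_σ, 1 + X_τ)`. The orbit map
`(σ, τ) ↦ (1 + X_σ) X_φ (1 + X_τ)` onto `O_φ` has fibres of equal size, so averaging `θ ∘ λ_η`
over `O_φ` is the same as averaging over all `(σ, τ)`. Now
`λ_η((1 + X_σ) X_φ (1 + X_τ)) = λ_η(X_φ) + τ ⬝ b + σ ⬝ (a + M τ)` with `a = a_φ^η`,
`b = b_φ^η`, `M = M_φ^η`, and this is affine in `σ`: summing over `σ` leaves only the `τ` with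
`M τ = -a`. Over this affine subspace `τ ↦ θ(τ ⬝ b)` sums to `θ(b₀ ⬝ b) q^{|J| - rank M}` if `b`
is orthogonal to `ker M`, and to `0` otherwise.
-/

open Finset Matrix

theorem AddChar.map_sum_eq_prod {A M ι : Type*} [AddCommMonoid A] [CommMonoid M]
    (ψ : AddChar A M) (s : Finset ι) (g : ι → A) : ψ (∑ i ∈ s, g i) = ∏ i ∈ s, ψ (g i) := by
  classical
  induction s using Finset.induction_on with
  | empty => simp
  | insert i s hi ih => rw [sum_insert hi, prod_insert hi, AddChar.map_add_eq_mul, ih]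

section CharacterSums

variable {F : Type*} [Field F] {θ : AddChar F ℂ}

theorem AddChar.sum_apply_linearMap (hθ : θ ≠ 1) {V : Type*} [AddCommGroup V] [Module F V]
    [Fintype V] (f : V →ₗ[F] F) [Decidable (f = 0)] :
    ∑ v, θ (f v) = if f = 0 then (Fintype.card V : ℂ) else 0 := by
  split_ifs with hf
  · simp [hf]
  refine AddChar.sum_eq_zero_of_ne_one (ψ := θ.compAddMonoidHom f.toAddMonoidHom) ?_
  obtain ⟨s, hs⟩ := AddChar.ne_one_iff.1 hθ
  obtain ⟨v, hv⟩ := LinearMap.surjective_or_eq_zero f |>.resolve_right hf s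
  exact AddChar.ne_one_iff.2 ⟨v, by simpa [hv] using hs⟩

variable [Fintype F] [DecidableEq F] {ι m : Type*} [Fintype ι] [DecidableEq ι] [Fintype m]

theorem AddChar.sum_apply_dotProduct (hθ : θ ≠ 1) (w : ι → F) :
    ∑ σ : ι → F, θ (σ ⬝ᵥ w) = if w = 0 then (Fintype.card F : ℂ) ^ Fintype.card ι else 0 := by
  have := θ.sum_apply_linearMap hθ (dotProductEquiv F ι w)
  simp only [dotProductEquiv_apply_apply, LinearEquiv.map_eq_zero_iff, Fintype.card_fun] at this
  simpa [dotProduct_comm] using this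

theorem card_ker_mulVec_mul_pow_rank (M : Matrix m ι F) :
    #{v | M *ᵥ v = 0} * Fintype.card F ^ M.rank = Fintype.card F ^ Fintype.card ι := by
  classical
  have hker : #{v | M *ᵥ v = 0} = Fintype.card (LinearMap.ker M.mulVecLin) := by
    rw [← Fintype.card_coe]
    exact Fintype.card_congr (Equiv.subtypeEquivRight fun v => by simp)
  rw [hker, Module.card_eq_pow_finrank (K := F), ← pow_add, Matrix.rank, add_comm,
    LinearMap.finrank_range_add_finrank_ker, Module.finrank_fintype_fun_eq_card]

theorem sum_filter_mulVec_eq_sum_ker {M : Matrix m ι F} {c : m → F} {τ₀ : ι → F}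
    (hτ₀ : M *ᵥ τ₀ = c) {β : Type*} [AddCommMonoid β] (g : (ι → F) → β) :
    ∑ τ ∈ univ.filter (fun τ => M *ᵥ τ = c), g τ
      = ∑ v ∈ univ.filter (fun v => M *ᵥ v = 0), g (τ₀ + v) :=
  (Finset.sum_equiv (Equiv.addLeft τ₀) (by simp [mulVec_add, hτ₀]) (by simp)).symm

theorem AddChar.sum_filter_mulVec_eq_of_forall {M : Matrix m ι F} {c : m → F} {τ₀ b : ι → F}
    (hτ₀ : M *ᵥ τ₀ = c) (hb : ∀ v, M *ᵥ v = 0 → b ⬝ᵥ v = 0) :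
    ∑ τ ∈ univ.filter (fun τ => M *ᵥ τ = c), θ (τ ⬝ᵥ b)
      = θ (τ₀ ⬝ᵥ b) * ((Fintype.card F : ℂ) ^ Fintype.card ι / (Fintype.card F : ℂ) ^ M.rank) := by
  have hterm : ∀ v ∈ univ.filter (fun v => M *ᵥ v = 0), θ ((τ₀ + v) ⬝ᵥ b) = θ (τ₀ ⬝ᵥ b) :=
    fun v hv => by rw [add_dotProduct, dotProduct_comm v, hb v (mem_filter.1 hv).2, add_zero]
  rw [sum_filter_mulVec_eq_sum_ker hτ₀, sum_congr rfl hterm, sum_const, nsmul_eq_mul, mul_comm]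
  congr 1
  rw [eq_div_iff (by simp)]
  exact_mod_cast card_ker_mulVec_mul_pow_rank M

theorem AddChar.sum_filter_mulVec_eq_zero (hθ : θ ≠ 1) {M : Matrix m ι F} {c : m → F} {b : ι → F}
    (h : ¬((∃ τ₀, M *ᵥ τ₀ = c) ∧ ∀ v, M *ᵥ v = 0 → b ⬝ᵥ v = 0)) :
    ∑ τ ∈ univ.filter (fun τ => M *ᵥ τ = c), θ (τ ⬝ᵥ b) = 0 := by
  classical
  by_cases hc : ∃ τ₀, M *ᵥ τ₀ = c
  swap
  · rw [filter_false_of_mem fun τ _ h => hc ⟨τ, h⟩, sum_empty]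
  obtain ⟨τ₀, hτ₀⟩ := hc
  obtain ⟨v, hv, hbv⟩ : ∃ v, M *ᵥ v = 0 ∧ b ⬝ᵥ v ≠ 0 := by
    simpa using not_and.1 h ⟨τ₀, hτ₀⟩
  have hker := θ.sum_apply_linearMap hθ
    (dotProductEquiv F ι b ∘ₗ (LinearMap.ker M.mulVecLin).subtype)
  rw [if_neg fun h0 => hbv (by simpa using LinearMap.congr_fun h0 ⟨v, by simpa using hv⟩)] at hker
  have hker' : ∑ v ∈ univ.filter (fun v => M *ᵥ v = 0), θ (v ⬝ᵥ b) = 0 := by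
    rw [sum_subtype _ (p := (· ∈ LinearMap.ker M.mulVecLin)) (F := inferInstance) (by simp)]
    simpa [dotProduct_comm] using hker
  simp_rw [sum_filter_mulVec_eq_sum_ker hτ₀, add_dotProduct, AddChar.map_add_eq_mul, ← mul_sum,
    hker', mul_zero]

end CharacterSums

theorem finsum_mem_range_div_natCard {α β : Type*} [Fintype α] (f : α → β) {K : ℕ}
    (hK : ∀ a, Nat.card {x // f x = f a} = K) (g : β → ℂ) :
    (∑ᶠ y ∈ Set.range f, g y) / Nat.card (Set.range f) = (∑ x, g (f x)) / Fintype.card α := by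
  classical
  rcases isEmpty_or_nonempty α with hα | ⟨⟨a⟩⟩
  · simp
  have hfib : ∀ y ∈ univ.image f, #{x | f x = y} = K := by
    simp only [mem_image, mem_univ, true_and, forall_exists_index]
    rintro y a rfl
    rw [← hK a, Nat.card_eq_fintype_card, Fintype.card_subtype]
  have hK0 : (K : ℂ) ≠ 0 := by
    rw [← hK a, Nat.cast_ne_zero]
    exact (Nat.card_pos_iff.2 ⟨⟨⟨a, rfl⟩⟩, inferInstance⟩).ne'
  have hsum : ∑ x, g (f x) = K * ∑ y ∈ univ.image f, g y := by
    rw [← sum_fiberwise_of_maps_to (g := f) (fun x _ => mem_image_of_mem f (mem_univ x)),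
      mul_sum]
    refine sum_congr rfl fun y hy => ?_
    rw [sum_congr rfl fun x hx => by rw [(mem_filter.1 hx).2], sum_const, nsmul_eq_mul,
      ← hfib y hy]
  have hcard : Fintype.card α = K * #(univ.image f) := by
    rw [← card_univ, card_eq_sum_card_image f univ, sum_congr rfl hfib, sum_const, smul_eq_mul,
      mul_comm]
  rw [← Set.image_univ, ← coe_univ, ← coe_image, finsum_mem_coe_finset, Nat.card_coe_set_eq,
    Set.ncard_coe_finset, hsum, hcard, Nat.cast_mul, mul_div_mul_left _ _ hK0]

namespace SCT

variable {F : Type*} [Field F] {n : ℕ} {J : Finset (Pr n)}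

theorem Closed.mk_self_notMem (hJ : Closed J) (i : Fin n) : (i, i) ∉ J :=
  fun h => lt_irrefl i (hJ.1 _ h)

theorem add_mem_nJset {A B : Matrix (Fin n) (Fin n) F} (hA : A ∈ nJset J) (hB : B ∈ nJset J) :
    A + B ∈ nJset J :=
  fun i j h => by rw [Matrix.add_apply, hA i j h, hB i j h, add_zero]

theorem Closed.mul_mem_nJset (hJ : Closed J) {A B : Matrix (Fin n) (Fin n) F}
    (hA : A ∈ nJset J) (hB : B ∈ nJset J) : A * B ∈ nJset J := by
  intro i k hik
  refine (mul_apply ..).trans <| sum_eq_zero fun j _ => ?_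
  by_cases hij : (i, j) ∈ J
  · rw [hB j k fun hjk => hik (hJ.2 i j k hij hjk), mul_zero]
  · rw [hA i j hij, zero_mul]

theorem Closed.isUnit_one_add (hJ : Closed J) {N : Matrix (Fin n) (Fin n) F}
    (hN : N ∈ nJset J) : IsUnit (1 + N) := by
  have hupper : (1 + N).IsUpperTriangular := fun i j (hji : j < i) => by
    rw [Matrix.add_apply, one_apply_ne (ne_of_lt hji).symm, hN i j fun h => (hJ.1 _ h).not_gt hji,
      add_zero]
  rw [isUnit_iff_isUnit_det, det_of_isUpperTriangular hupper]
  simp [hN _ _ (hJ.mk_self_notMem _)]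

/-- `X_σ` for `σ` indexed by `J` itself: `σ ↦ 1 + X_σ` is a bijection onto `U_J`. -/
def ofCoord (J : Finset (Pr n)) (σ : {p // p ∈ J} → F) : Matrix (Fin n) (Fin n) F :=
  Matrix.of fun i j => if h : (i, j) ∈ J then σ ⟨(i, j), h⟩ else 0

def toCoord (J : Finset (Pr n)) (M : Matrix (Fin n) (Fin n) F) : {p // p ∈ J} → F :=
  fun p => M p.1.1 p.1.2

@[simp]
theorem toCoord_ofCoord (σ : {p // p ∈ J} → F) : toCoord J (ofCoord J σ) = σ := by
  ext p
  simp [toCoord, ofCoord, p.2]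

theorem ofCoord_injective : Function.Injective (ofCoord (F := F) J) :=
  Function.LeftInverse.injective toCoord_ofCoord

theorem ofCoord_mem_nJset (σ : {p // p ∈ J} → F) : ofCoord J σ ∈ nJset J :=
  fun _ _ h => dif_neg h

theorem ofCoord_toCoord {M : Matrix (Fin n) (Fin n) F} (hM : M ∈ nJset J) :
    ofCoord J (toCoord J M) = M := by
  ext i j
  by_cases h : (i, j) ∈ J
  · simp [ofCoord, toCoord, h]
  · simp [ofCoord, h, hM i j h]

theorem UJ_eq_range (hJ : Closed J) :
    UJ J = Set.range fun σ : {p // p ∈ J} → F => 1 + ofCoord J σ := by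
  ext M
  constructor
  · rintro ⟨hdiag, hoff⟩
    have hM : M - 1 ∈ nJset J := fun i j h => by
      by_cases hij : i = j
      · subst hij; simp [hdiag]
      · simp [one_apply_ne hij, hoff i j hij h]
    exact ⟨toCoord J (M - 1), by simp only [ofCoord_toCoord hM, add_sub_cancel]⟩
  · rintro ⟨σ, rfl⟩
    refine ⟨fun i => ?_, fun i j hij h => ?_⟩
    · simp [ofCoord_mem_nJset σ i i (hJ.mk_self_notMem i)]
    · simp [one_apply_ne hij, ofCoord_mem_nJset σ i j h]

def coordMul (J : Finset (Pr n)) (σ τ : {p // p ∈ J} → F) : {p // p ∈ J} → F :=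
  toCoord J ((1 + ofCoord J σ) * (1 + ofCoord J τ) - 1)

theorem one_add_ofCoord_coordMul (hJ : Closed J) (σ τ : {p // p ∈ J} → F) :
    1 + ofCoord J (coordMul J σ τ) = (1 + ofCoord J σ) * (1 + ofCoord J τ) := by
  have hmem : (1 + ofCoord J σ) * (1 + ofCoord J τ) - 1 ∈ nJset J := by
    rw [show (1 + ofCoord J σ) * (1 + ofCoord J τ) - 1
        = ofCoord J σ + ofCoord J τ + ofCoord J σ * ofCoord J τ by noncomm_ring]
    exact add_mem_nJset (add_mem_nJset (ofCoord_mem_nJset σ) (ofCoord_mem_nJset τ))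
      (hJ.mul_mem_nJset (ofCoord_mem_nJset σ) (ofCoord_mem_nJset τ))
  rw [coordMul, ofCoord_toCoord hmem, add_sub_cancel]

section Finite

variable [Finite F]

theorem coordMul_left_bijective (hJ : Closed J) (σ : {p // p ∈ J} → F) :
    Function.Bijective (coordMul J σ) := by
  refine Finite.injective_iff_bijective.1 fun τ τ' h => ofCoord_injective ?_
  have := congrArg (1 + ofCoord J ·) h
  simp only [one_add_ofCoord_coordMul hJ, (hJ.isUnit_one_add (ofCoord_mem_nJset σ)).mul_right_inj,
    add_right_inj] at this
  exact this

theorem coordMul_right_bijective (hJ : Closed J) (τ : {p // p ∈ J} → F) :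
    Function.Bijective (coordMul J · τ) := by
  refine Finite.injective_iff_bijective.1 fun σ σ' h => ofCoord_injective ?_
  have := congrArg (1 + ofCoord J ·) h
  simp only [one_add_ofCoord_coordMul hJ, (hJ.isUnit_one_add (ofCoord_mem_nJset τ)).mul_left_inj,
    add_right_inj] at this
  exact this

end Finite

def orbitMap (J : Finset (Pr n)) (φ : Pr n → F)
    (x : ({p // p ∈ J} → F) × ({p // p ∈ J} → F)) : Matrix (Fin n) (Fin n) F :=
  (1 + ofCoord J x.1) * Xmat J φ * (1 + ofCoord J x.2)

theorem biOrbit_eq_range (hJ : Closed J) (φ : Pr n → F) :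
    biOrbit J φ = Set.range (orbitMap J φ) := by
  ext Y
  simp only [biOrbit, UJ_eq_range hJ, Set.mem_range, Set.mem_ofPred_eq, orbitMap, Prod.exists]
  constructor
  · rintro ⟨_, _, ⟨σ, rfl⟩, ⟨τ, rfl⟩, rfl⟩
    exact ⟨σ, τ, rfl⟩
  · rintro ⟨σ, τ, rfl⟩
    exact ⟨_, _, ⟨σ, rfl⟩, ⟨τ, rfl⟩, rfl⟩

theorem natCard_fiber_orbitMap [Finite F] (hJ : Closed J) (φ : Pr n → F)
    (x₀ : ({p // p ∈ J} → F) × ({p // p ∈ J} → F)) :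
    Nat.card {x // orbitMap J φ x = orbitMap J φ x₀}
      = Nat.card {x // orbitMap J φ x = Xmat J φ} := by
  let e := (Equiv.ofBijective _ (coordMul_left_bijective hJ x₀.1)).prodCongr
    (Equiv.ofBijective _ (coordMul_right_bijective hJ x₀.2))
  refine (Nat.card_congr (e.subtypeEquiv fun x => ?_)).symm
  have hu := hJ.isUnit_one_add (ofCoord_mem_nJset x₀.1)
  have hv := hJ.isUnit_one_add (ofCoord_mem_nJset x₀.2)
  simp only [e, orbitMap, Equiv.prodCongr_apply, Prod.map, Equiv.ofBijective_apply,
    one_add_ofCoord_coordMul hJ, ← mul_assoc, hv.mul_left_inj]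
  simp only [mul_assoc, hu.mul_right_inj]

theorem Xmat_apply (φ : Pr n → F) (i j : Fin n) :
    Xmat J φ i j = if (i, j) ∈ J then φ (i, j) else 0 := rfl

theorem sum_sum_ofCoord_mul (σ : {p // p ∈ J} → F) (f : Fin n → Fin n → F) :
    ∑ i, ∑ j, ofCoord J σ i j * f i j = σ ⬝ᵥ fun p => f p.1.1 p.1.2 := by
  rw [← Fintype.sum_prod_type', ← sum_subset (subset_univ J) fun p _ hp => by
    simp [ofCoord, hp]]
  simp only [ofCoord, of_apply, dite_mul, zero_mul]
  rw [sum_dite_of_true fun _ h => h]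
  rfl

theorem trace_ofCoord_mul (σ : {p // p ∈ J} → F) (C : Matrix (Fin n) (Fin n) F) :
    trace (ofCoord J σ * C) = σ ⬝ᵥ fun p => C p.1.2 p.1.1 := by
  simp only [trace, Matrix.diag, mul_apply, sum_sum_ofCoord_mul]

theorem lam_eq_trace (η : Pr n → F) (Y : Matrix (Fin n) (Fin n) F) :
    lam J η Y = trace (Y * (Xmat J η)ᵀ) := by
  simp [lam, trace, mul_apply, Xmat_apply, ← Fintype.sum_prod_type', mul_comm]

theorem lam_add (η : Pr n → F) (X Y : Matrix (Fin n) (Fin n) F) :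
    lam J η (X + Y) = lam J η X + lam J η Y := by
  simp only [lam_eq_trace, add_mul, trace_add]

section Closed

variable (hJ : Closed J) (φ η : Pr n → F)
include hJ

theorem lam_ofCoord_mul_Xmat (σ : {p // p ∈ J} → F) :
    lam J η (ofCoord J σ * Xmat J φ) = σ ⬝ᵥ aVec J φ η := by
  rw [lam_eq_trace, mul_assoc, trace_ofCoord_mul]
  congr 1
  ext ⟨⟨i, j⟩, hij⟩
  refine (mul_apply ..).trans <| sum_congr rfl fun k _ => ?_
  by_cases hjk : (j, k) ∈ J <;> simp [Xmat_apply, hjk, hJ.2 i j k hij]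

theorem lam_Xmat_mul_ofCoord (τ : {p // p ∈ J} → F) :
    lam J η (Xmat J φ * ofCoord J τ) = τ ⬝ᵥ bVec J φ η := by
  rw [lam_eq_trace, mul_assoc, trace_mul_comm, mul_assoc, trace_ofCoord_mul]
  congr 1
  ext ⟨⟨j, k⟩, hjk⟩
  refine (mul_apply ..).trans <| sum_congr rfl fun i _ => ?_
  by_cases hij : (i, j) ∈ J
  · simp [Xmat_apply, hij, hJ.2 i j k hij hjk, mul_comm]
  · simp [Xmat_apply, hij]

theorem lam_ofCoord_mul_Xmat_mul_ofCoord (σ τ : {p // p ∈ J} → F) :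
    lam J η (ofCoord J σ * Xmat J φ * ofCoord J τ) = σ ⬝ᵥ Mmesh J φ η *ᵥ τ := by
  rw [lam_eq_trace, mul_assoc, mul_assoc, trace_ofCoord_mul]
  congr 1
  ext ⟨⟨i, j⟩, hij⟩
  have hsum : (Xmat J φ * (ofCoord J τ * (Xmat J η)ᵀ)) j i
      = ∑ k, ∑ l, ofCoord J τ k l * (Xmat J φ j k * Xmat J η i l) := by
    simp only [mul_apply, transpose_apply, mul_sum]
    exact sum_congr rfl fun k _ => sum_congr rfl fun l _ => by ring
  rw [hsum, sum_sum_ofCoord_mul, mulVec, dotProduct_comm]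
  congr 1
  ext ⟨⟨k, l⟩, hkl⟩
  by_cases hjk : (j, k) ∈ J
  · simp [Mmesh, Xmat_apply, hjk, hJ.2 i k l (hJ.2 i j k hij hjk) hkl]
  · simp [Mmesh, Xmat_apply, hjk]

theorem lam_orbitMap (σ τ : {p // p ∈ J} → F) :
    lam J η (orbitMap J φ (σ, τ))
      = lam J η (Xmat J φ) + τ ⬝ᵥ bVec J φ η + σ ⬝ᵥ (aVec J φ η + Mmesh J φ η *ᵥ τ) := by
  rw [orbitMap, show (1 + ofCoord J σ) * Xmat J φ * (1 + ofCoord J τ)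
      = Xmat J φ + Xmat J φ * ofCoord J τ + (ofCoord J σ * Xmat J φ
        + ofCoord J σ * Xmat J φ * ofCoord J τ) by noncomm_ring,
    lam_add, lam_add, lam_add, lam_Xmat_mul_ofCoord hJ, lam_ofCoord_mul_Xmat hJ,
    lam_ofCoord_mul_Xmat_mul_ofCoord hJ, dotProduct_add]

theorem sum_orbitMap [Fintype F] [DecidableEq F] {θ : AddChar F ℂ} (hθ : θ ≠ 1) :
    ∑ x, θ (lam J η (orbitMap J φ x))
      = (Fintype.card F : ℂ) ^ Fintype.card {p // p ∈ J} * θ (lam J η (Xmat J φ)) *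
        ∑ τ ∈ univ.filter (fun τ => Mmesh J φ η *ᵥ τ = -aVec J φ η), θ (τ ⬝ᵥ bVec J φ η) := by
  rw [Fintype.sum_prod_type, sum_comm]
  simp_rw [lam_orbitMap hJ, AddChar.map_add_eq_mul, ← mul_sum, θ.sum_apply_dotProduct hθ,
    mul_ite, mul_zero, ← sum_filter, mul_sum]
  refine sum_congr (filter_congr fun τ _ => ?_) fun τ _ => by ring
  rw [add_comm, add_eq_zero_iff_eq_neg]

end Closed

theorem addChar_lam_Xmat_eq_prod (θ : AddChar F ℂ) [DecidableEq F] (φ η : Pr n → F) :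
    θ (lam J η (Xmat J φ)) = ∏ p ∈ J.filter (fun p => φ p ≠ 0 ∧ η p ≠ 0), θ (φ p * η p) := by
  rw [prod_filter_of_ne fun p _ hp => ?_, lam, θ.map_sum_eq_prod]
  · exact prod_congr rfl fun p hp => by rw [Xmat_apply, if_pos hp, mul_comm]
  · constructor <;> rintro h0 <;> simp [h0] at hp

section Fintype

variable [Fintype F]

theorem superchar_eq_sum (hJ : Closed J) (θ : AddChar F ℂ) (η φ : Pr n → F) :
    superchar J θ η φ = (Fintype.card F : ℂ) ^ corank J η *
      (∑ x, (starRingEnd ℂ) (θ (lam J η (orbitMap J φ x))))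
        / ((Fintype.card F : ℂ) ^ Fintype.card {p // p ∈ J} *
          (Fintype.card F : ℂ) ^ Fintype.card {p // p ∈ J}) := by
  rw [superchar, div_mul_eq_mul_div, mul_div_assoc, biOrbit_eq_range hJ,
    finsum_mem_range_div_natCard _ (natCard_fiber_orbitMap hJ φ), mul_div_assoc]
  rw [Fintype.card_prod, Fintype.card_fun]
  push_cast
  rfl

theorem conj_superchar_eq [DecidableEq F] (hJ : Closed J) {θ : AddChar F ℂ} (hθ : θ ≠ 1)
    (φ η : Pr n → F) :
    (starRingEnd ℂ) (superchar J θ η φ) =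
      (Fintype.card F : ℂ) ^ corank J η / (Fintype.card F : ℂ) ^ Fintype.card {p // p ∈ J} *
        θ (lam J η (Xmat J φ)) *
        ∑ τ ∈ univ.filter (fun τ => Mmesh J φ η *ᵥ τ = -aVec J φ η), θ (τ ⬝ᵥ bVec J φ η) := by
  simp only [superchar_eq_sum hJ, map_div₀, map_mul, map_sum, map_pow, map_natCast,
    Complex.conj_conj, sum_orbitMap hJ φ η hθ]
  field_simp

end Fintype

theorem stmt12 {F : Type*} [Field F] [Fintype F] [DecidableEq F] {n : ℕ}
    (J : Finset (Pr n)) (hJ : Closed J)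
    (θ : AddChar F ℂ) (hθ : θ ≠ 1) (φ η : Pr n → F) :
    (Meshes J φ η →
      ∀ b0 : {p // p ∈ J} → F, (Mmesh J φ η).mulVec b0 = -aVec J φ η →
        (starRingEnd ℂ) (superchar J θ η φ) =
          ((Fintype.card F : ℂ) ^ corank J η / (Fintype.card F : ℂ) ^ (Mmesh J φ η).rank) *
            θ (b0 ⬝ᵥ bVec J φ η) *
            ∏ p ∈ J.filter (fun p => φ p ≠ 0 ∧ η p ≠ 0), θ (φ p * η p)) ∧
    (¬ Meshes J φ η → superchar J θ η φ = 0) := by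
  have hconj := conj_superchar_eq hJ hθ φ η
  refine ⟨fun hmesh b0 hb0 => ?_, fun hmesh => ?_⟩
  · rw [hconj, θ.sum_filter_mulVec_eq_of_forall hb0 hmesh.2, addChar_lam_Xmat_eq_prod]
    field_simp
  · rw [θ.sum_filter_mulVec_eq_zero hθ hmesh, mul_zero, map_eq_zero] at hconj
    exact hconj

end SCT
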